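/- arXiv:2406.13595 — 4 statements merged into one kernel-verified Lean document; each statement's English description precedes it below -/
import Mathlib

section
/- If P is a continuous L-ordered set, then for all x, y ∈ P, ⇓y(x) = ⋁_{z ∈ P} ⇓y(z) ∧ ⇓z(x) (the interpolation property of the fuzzy way-below relation). -/
/-!
The L-subset `w ↦ ⋁_z ⇓y(z) ∧ ⇓z(w)` is directed, because `⇓y` and every `⇓z` are and
`⇓z(w)` is monotone in `z`, and its supremum is `y`, because `⇓y` has supremum `y` and each `⇓z`
has supremum `z`. Testing `⇓y(x)` against this directed L-subset gives
`⇓y(x) ≤ ⋁_z ⇓y(z) ∧ ⇓z(x)`, using that `⇓z` is a lower set. Conversely `⇓z(x) ≤ e(x, z)` and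
`⇓y` is a lower set, so `⇓y(z) ∧ ⇓z(x) ≤ ⇓y(x)`.
-/

open scoped Classical

namespace FuzzyPaper

variable {L : Type*} [Order.Frame L]

/-- The inclusion L-order on L-subsets: sub(A,B) = ⨅ x, A x ⇨ B x. -/
def subF {X : Type*} (A B : X → L) : L := ⨅ x, A x ⇨ B x

/-- `e` is an L-order: reflexivity, transitivity, antisymmetry. -/
def IsLOrder {P : Type*} (e : P → P → L) : Prop :=
  (∀ x, e x x = ⊤) ∧ (∀ x y z, e x y ⊓ e y z ≤ e x z) ∧
  (∀ x y, e x y ⊓ e y x = ⊤ → x = y)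

/-- `D` is a directed L-subset of `(P, e)`. -/
def IsDirectedL {P : Type*} (e : P → P → L) (D : P → L) : Prop :=
  (⨆ x, D x) = ⊤ ∧ ∀ x y, D x ⊓ D y ≤ ⨆ z, D z ⊓ e x z ⊓ e y z

/-- `x` is a supremum of the L-subset `A`: e(x,y) = sub(A, ↓y) for all y. -/
def IsSupOf {P : Type*} (e : P → P → L) (A : P → L) (x : P) : Prop :=
  ∀ y, e x y = ⨅ z, A z ⇨ e z y

/-- The fuzzy way-below L-subset ⇓x :
⇓x(y) = ⨅_{D directed with a supremum s} (e(x,s) ⇨ ⨆ d, D d ⊓ e(y,d)). -/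
def dwb {P : Type*} (e : P → P → L) (x : P) : P → L := fun y =>
  ⨅ Ds : {Ds : (P → L) × P // IsDirectedL e Ds.1 ∧ IsSupOf e Ds.1 Ds.2},
    e x Ds.1.2 ⇨ ⨆ d, Ds.1.1 d ⊓ e y d

/-- A continuous L-ordered set: ⇓x is directed with supremum x, for each x. -/
def IsContinuousLOrder {P : Type*} (e : P → P → L) : Prop :=
  IsLOrder e ∧ ∀ x, IsDirectedL e (dwb e x) ∧ IsSupOf e (dwb e x) x

/-- An L-dcpo: every directed L-subset has a supremum. -/
def IsLDcpo {P : Type*} (e : P → P → L) : Prop :=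
  IsLOrder e ∧ ∀ D, IsDirectedL e D → ∃ x, IsSupOf e D x

/-- A continuous L-dcpo. -/
def IsContinuousLDcpo {P : Type*} (e : P → P → L) : Prop :=
  IsLDcpo e ∧ ∀ x, IsDirectedL e (dwb e x) ∧ IsSupOf e (dwb e x) x

/-- Scott open L-subsets: upper sets inaccessible by directed suprema. -/
def IsScottOpen {P : Type*} (e : P → P → L) (A : P → L) : Prop :=
  (∀ x y, A x ⊓ e x y ≤ A y) ∧
  ∀ D s, IsDirectedL e D → IsSupOf e D s → A s = ⨆ x, A x ⊓ D x

/-- The Scott L-topology. -/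
def scottOpens {P : Type*} (e : P → P → L) : Set (P → L) := {A | IsScottOpen e A}

/-- `𝒪` is a (stratified) L-topology on X. -/
def IsLTop {X : Type*} (𝒪 : Set (X → L)) : Prop :=
  (∀ A ∈ 𝒪, ∀ B ∈ 𝒪, A ⊓ B ∈ 𝒪) ∧ (∀ S ⊆ 𝒪, sSup S ∈ 𝒪) ∧
  (∀ a : L, (fun _ => a) ∈ 𝒪)

/-- T₀ separation. -/
def IsT0 {X : Type*} (𝒪 : Set (X → L)) : Prop :=
  ∀ x y : X, (∀ A ∈ 𝒪, A x = A y) → x = y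

/-- The specialization L-order of an L-topological space. -/
def specE {X : Type*} (𝒪 : Set (X → L)) : X → X → L := fun x y =>
  ⨅ A : 𝒪, (A : X → L) x ⇨ (A : X → L) y

/-- A point of 𝒪(X): preserves binary meets, arbitrary joins and constants. -/
def IsPoint {X : Type*} (𝒪 : Set (X → L)) (p : 𝒪 → L) : Prop :=
  (∀ A B C : 𝒪, (C : X → L) = (A : X → L) ⊓ (B : X → L) → p C = p A ⊓ p B) ∧
  (∀ (S : Set 𝒪) (C : 𝒪), (C : X → L) = sSup (Subtype.val '' S) →
    p C = ⨆ A ∈ S, p A) ∧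
  (∀ (a : L) (C : 𝒪), (C : X → L) = (fun _ => a) → p C = a)

/-- The inclusion L-order on maps 𝒪 → L (in particular on points). -/
def subPt {X : Type*} (𝒪 : Set (X → L)) (p q : 𝒪 → L) : L := ⨅ A, p A ⇨ q A

/-- η : x ↦ [x], where [x](A) = A(x). -/
def etaPt {X : Type*} (𝒪 : Set (X → L)) (x : X) : 𝒪 → L := fun A => (A : X → L) x

/-- L-sobriety: η is a bijection onto the set of points. -/
def IsSober {X : Type*} (𝒪 : Set (X → L)) : Prop :=
  (∀ x y : X, etaPt 𝒪 x = etaPt 𝒪 y → x = y) ∧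
  (∀ p : 𝒪 → L, IsPoint 𝒪 p → ∃ x, p = etaPt 𝒪 x)

/-- Super-compact L-subsets. -/
def IsSuperCompact {X : Type*} (𝒪 : Set (X → L)) (A : X → L) : Prop :=
  (⨆ x, A x) = ⊤ ∧ ∀ S ⊆ 𝒪, subF A (sSup S) = ⨆ V ∈ S, subF A V

/-- Interior operator. -/
def interiorF {X : Type*} (𝒪 : Set (X → L)) (A : X → L) : X → L :=
  sSup {B ∈ 𝒪 | B ≤ A}

/-- Locally super-compact L-topological spaces. -/
def IsLocallySC {X : Type*} (𝒪 : Set (X → L)) : Prop :=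
  ∀ A ∈ 𝒪, A = fun x => ⨆ B ∈ {B | IsSuperCompact 𝒪 B}, subF B A ⊓ interiorF 𝒪 B x

/-- `ℬ` is a base of the L-topology `𝒪`. -/
def IsBase {X : Type*} (𝒪 : Set (X → L)) (ℬ : Set (X → L)) : Prop :=
  ℬ ⊆ 𝒪 ∧ ∀ A ∈ 𝒪, A = fun x => ⨆ B ∈ ℬ, subF B A ⊓ B x

/-- Strong locally super-compact: a base of super-compact open sets. -/
def IsStrongLocallySC {X : Type*} (𝒪 : Set (X → L)) : Prop :=
  ∃ ℬ, IsBase 𝒪 ℬ ∧ ∀ B ∈ ℬ, IsSuperCompact 𝒪 B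

/-- Continuity of maps of L-topological spaces. -/
def LCont {X Y : Type*} (𝒪X : Set (X → L)) (𝒪Y : Set (Y → L)) (f : X → Y) : Prop :=
  ∀ B ∈ 𝒪Y, (B ∘ f) ∈ 𝒪X

/-- k(x)(y) = e(y,x) if y is compact (⇓y(y) = ⊤), and ⊥ otherwise. -/
noncomputable def kfun {P : Type*} (e : P → P → L) (x : P) : P → L := fun y =>
  if dwb e y y = ⊤ then e y x else ⊥

/-- Algebraic L-dcpo. -/
def IsAlgebraicLDcpo {P : Type*} (e : P → P → L) : Prop :=
  IsLDcpo e ∧ ∀ x, IsDirectedL e (kfun e x) ∧ IsSupOf e (kfun e x) x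

/-- Quasihomeomorphism: f^← : 𝒪Y → 𝒪X is a bijection. -/
def IsQuasiHomeo {X Y : Type*} (𝒪X : Set (X → L)) (𝒪Y : Set (Y → L)) (f : X → Y) : Prop :=
  LCont 𝒪X 𝒪Y f ∧ (∀ A ∈ 𝒪X, ∃ B ∈ 𝒪Y, B ∘ f = A) ∧
  (∀ B₁ ∈ 𝒪Y, ∀ B₂ ∈ 𝒪Y, B₁ ∘ f = B₂ ∘ f → B₁ = B₂)

/-- Subspace embedding of L-topological spaces. -/
def IsEmbeddingL {X Y : Type*} (𝒪X : Set (X → L)) (𝒪Y : Set (Y → L)) (f : X → Y) : Prop :=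
  Function.Injective f ∧ 𝒪X = {A | ∃ B ∈ 𝒪Y, B ∘ f = A}

/-- Strict embedding: a quasihomeomorphism which is a subspace embedding. -/
def IsStrictEmbedding {X Y : Type*} (𝒪X : Set (X → L)) (𝒪Y : Set (Y → L)) (f : X → Y) : Prop :=
  IsEmbeddingL 𝒪X 𝒪Y f ∧ IsQuasiHomeo 𝒪X 𝒪Y f

/-- L-sobrification: universal L-sober space over X. -/
def IsSobrification {X Y : Type*} (𝒪X : Set (X → L)) (𝒪Y : Set (Y → L)) (j : X → Y) : Prop :=
  IsLTop 𝒪Y ∧ IsSober 𝒪Y ∧ LCont 𝒪X 𝒪Y j ∧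
  ∀ (Z : Type*) (𝒪Z : Set (Z → L)), IsLTop 𝒪Z → IsSober 𝒪Z →
    ∀ f : X → Z, LCont 𝒪X 𝒪Z f →
      ∃! g : Y → Z, LCont 𝒪Y 𝒪Z g ∧ f = g ∘ j


structure IsLPreorder {P : Type*} (e : P → P → L) : Prop where
  refl : ∀ x, e x x = ⊤
  trans : ∀ x y z, e x y ⊓ e y z ≤ e x z

theorem IsLOrder.isLPreorder {P : Type*} {e : P → P → L} (h : IsLOrder e) : IsLPreorder e :=
  ⟨h.1, h.2.1⟩

section WayBelow

variable {P : Type*} {e : P → P → L}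

theorem IsDirectedL.iSup_inf {D : P → L} {F : P → P → L} (hD : IsDirectedL e D)
    (hF : ∀ z, IsDirectedL e (F z)) (hmono : ∀ z u w, e z u ⊓ F z w ≤ F u w) :
    IsDirectedL e (fun w => ⨆ z, D z ⊓ F z w) := by
  refine ⟨?_, fun w w' => ?_⟩
  · simp only [iSup_comm (ι := P), ← inf_iSup_eq, (hF _).1, inf_top_eq, hD.1]
  set G : P → L := fun w => ⨆ z, D z ⊓ F z w
  have hu : ∀ u, D u ⊓ (F u w ⊓ F u w') ≤ ⨆ v, G v ⊓ e w v ⊓ e w' v := fun u =>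
    calc D u ⊓ (F u w ⊓ F u w') ≤ D u ⊓ ⨆ v, F u v ⊓ e w v ⊓ e w' v :=
          inf_le_inf_left _ ((hF u).2 w w')
      _ = ⨆ v, D u ⊓ (F u v ⊓ e w v ⊓ e w' v) := inf_iSup_eq _ _
      _ ≤ ⨆ v, G v ⊓ e w v ⊓ e w' v := iSup_mono fun v => by
          simp only [← inf_assoc]
          exact inf_le_inf_right _ (inf_le_inf_right _ (le_iSup (fun z => D z ⊓ F z v) u))
  show G w ⊓ G w' ≤ ⨆ v, G v ⊓ e w v ⊓ e w' v
  rw [show G w ⊓ G w' = ⨆ z, ⨆ z', D z ⊓ F z w ⊓ (D z' ⊓ F z' w') by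
    simp only [G, iSup_inf_eq, inf_iSup_eq]; exact iSup_comm]
  refine iSup₂_le fun z z' => ?_
  calc D z ⊓ F z w ⊓ (D z' ⊓ F z' w')
      = (D z ⊓ D z') ⊓ (F z w ⊓ F z' w') := by ac_rfl
    _ ≤ (⨆ u, D u ⊓ e z u ⊓ e z' u) ⊓ (F z w ⊓ F z' w') := inf_le_inf_right _ (hD.2 z z')
    _ = ⨆ u, D u ⊓ ((e z u ⊓ F z w) ⊓ (e z' u ⊓ F z' w')) := by
        rw [iSup_inf_eq]; exact iSup_congr fun u => by ac_rfl
    _ ≤ ⨆ u, D u ⊓ (F u w ⊓ F u w') :=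
        iSup_mono fun u => inf_le_inf_left _ (inf_le_inf (hmono z u w) (hmono z' u w'))
    _ ≤ _ := iSup_le hu

theorem IsSupOf.iSup_inf {D : P → L} {F : P → P → L} {s : P} (hD : IsSupOf e D s)
    (hF : ∀ z, IsSupOf e (F z) z) : IsSupOf e (fun w => ⨆ z, D z ⊓ F z w) s := fun t =>
  calc e s t = ⨅ z, D z ⇨ e z t := hD t
    _ = ⨅ z, ⨅ w, D z ⊓ F z w ⇨ e w t := iInf_congr fun z => by
        rw [hF z t, himp_iInf_eq]; simp only [himp_himp]
    _ = ⨅ w, (⨆ z, D z ⊓ F z w) ⇨ e w t := by rw [iInf_comm]; simp only [iSup_himp_eq]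

theorem IsLPreorder.isDirectedL_principal (he : IsLPreorder e) (y : P) :
    IsDirectedL e (fun d => e d y) :=
  ⟨top_unique (le_iSup_of_le y (he.refl y).ge), fun a b =>
    le_iSup_of_le y (by dsimp only; rw [he.refl, top_inf_eq, inf_comm])⟩

theorem IsLPreorder.isSupOf_principal (he : IsLPreorder e) (y : P) :
    IsSupOf e (fun d => e d y) y := fun t =>
  le_antisymm (le_iInf fun z => le_himp_iff.mpr (inf_comm (e y t) _ ▸ he.trans z y t))
    (iInf_le_of_le y (by dsimp only; rw [he.refl, top_himp]))

theorem dwb_inf_le_iSup {D : P → L} {s : P} (hD : IsDirectedL e D) (hs : IsSupOf e D s)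
    (x y : P) : dwb e y x ⊓ e y s ≤ ⨆ d, D d ⊓ e x d :=
  le_himp_iff.mp (iInf_le (fun Ds : {Ds : (P → L) × P //
    IsDirectedL e Ds.1 ∧ IsSupOf e Ds.1 Ds.2} => e y Ds.1.2 ⇨ ⨆ d, Ds.1.1 d ⊓ e x d)
    ⟨(D, s), hD, hs⟩)

theorem IsLPreorder.dwb_le (he : IsLPreorder e) (x y : P) : dwb e y x ≤ e x y :=
  calc dwb e y x = dwb e y x ⊓ e y y := by rw [he.refl, inf_top_eq]
    _ ≤ ⨆ d, e d y ⊓ e x d :=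
        dwb_inf_le_iSup (he.isDirectedL_principal y) (he.isSupOf_principal y) x y
    _ ≤ e x y := iSup_le fun d => inf_comm (e d y) _ ▸ he.trans x d y

theorem IsLPreorder.dwb_anti_right (he : IsLPreorder e) (x x' y : P) :
    e x' x ⊓ dwb e y x ≤ dwb e y x' := by
  refine le_iInf fun Ds => le_himp_iff.mpr ?_
  calc e x' x ⊓ dwb e y x ⊓ e y Ds.1.2
      ≤ e x' x ⊓ ⨆ d, Ds.1.1 d ⊓ e x d := by
        rw [inf_assoc]; exact inf_le_inf_left _ (dwb_inf_le_iSup Ds.2.1 Ds.2.2 x y)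
    _ = ⨆ d, Ds.1.1 d ⊓ (e x' x ⊓ e x d) := by
        rw [inf_iSup_eq]; exact iSup_congr fun d => by ac_rfl
    _ ≤ ⨆ d, Ds.1.1 d ⊓ e x' d := iSup_mono fun d => inf_le_inf_left _ (he.trans x' x d)

theorem IsLPreorder.dwb_mono_left (he : IsLPreorder e) (x y y' : P) :
    e y' y ⊓ dwb e y' x ≤ dwb e y x := by
  refine le_iInf fun Ds => le_himp_iff.mpr ?_
  calc e y' y ⊓ dwb e y' x ⊓ e y Ds.1.2
      = dwb e y' x ⊓ (e y' y ⊓ e y Ds.1.2) := by ac_rfl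
    _ ≤ dwb e y' x ⊓ e y' Ds.1.2 := inf_le_inf_left _ (he.trans y' y Ds.1.2)
    _ ≤ ⨆ d, Ds.1.1 d ⊓ e x d := dwb_inf_le_iSup Ds.2.1 Ds.2.2 x y'

end WayBelow

/-- Interpolation property of the fuzzy way-below relation. -/
theorem stmt6 {P : Type*} (e : P → P → L) (he : IsContinuousLOrder e) :
    ∀ x y : P, dwb e y x = ⨆ z, dwb e y z ⊓ dwb e z x := by
  obtain ⟨hl, hc⟩ := he
  have hp := hl.isLPreorder
  intro x y
  have hdir : IsDirectedL e (fun w => ⨆ z, dwb e y z ⊓ dwb e z w) :=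
    (hc y).1.iSup_inf (fun z => (hc z).1) fun z u w => hp.dwb_mono_left w u z
  have hsup : IsSupOf e (fun w => ⨆ z, dwb e y z ⊓ dwb e z w) y :=
    (hc y).2.iSup_inf fun z => (hc z).2
  refine le_antisymm ?_ (iSup_le fun z => ?_)
  · calc dwb e y x = dwb e y x ⊓ e y y := by rw [hp.refl, inf_top_eq]
      _ ≤ ⨆ w, (⨆ z, dwb e y z ⊓ dwb e z w) ⊓ e x w := dwb_inf_le_iSup hdir hsup x y
      _ ≤ ⨆ z, dwb e y z ⊓ dwb e z x := by
          simp only [iSup_inf_eq]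
          refine iSup_le fun w => iSup_mono fun z => ?_
          rw [inf_assoc, inf_comm (dwb e z w)]
          exact inf_le_inf_left _ (hp.dwb_anti_right w x z)
  · calc dwb e y z ⊓ dwb e z x ≤ e x z ⊓ dwb e y z := by
          rw [inf_comm]; exact inf_le_inf_right _ (hp.dwb_le x z)
      _ ≤ dwb e y x := hp.dwb_anti_right z x y

end FuzzyPaper
end

section
/- Let X be a stratified L-topological space. Then the set pt_L𝒪(X) of points of 𝒪(X), ordered by inclusion L-order sub, is an L-dcpo; moreover for every directed L-subset 𝔻 of pt_L𝒪(X), the supremum is given pointwise by (⊔𝔻)(A) = ⋁_{p} 𝔻(p) ∧ p(A). -/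
open scoped Classical

namespace FuzzyPaper

variable {L : Type*} [Order.Frame L]

/-!
Joins and constants are preserved by the weighted join s(A) = ⋁_p 𝔻(p) ∧ p(A) as soon as
⋁ 𝔻 = ⊤, by infinite distributivity. Binary meets are preserved because directedness provides,
for points p and q, points z above both, and then p(A) ∧ q(B) ≤ z(A) ∧ z(B) = z(A ∧ B).
That s is the supremum is the frame identity
(⋁_p 𝔻(p) ∧ p(A)) → q(A) = ⋀_p 𝔻(p) → (p(A) → q(A)).
-/

section InclusionOrder

variable {ι : Type*}

theorem subF_self (A : ι → L) : subF A A = ⊤ := by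
  simp [subF]

theorem subF_inf_subF_le (A B C : ι → L) : subF A B ⊓ subF B C ≤ subF A C :=
  le_iInf fun i =>
    (inf_le_inf (iInf_le _ i) (iInf_le _ i)).trans (himp_triangle (A i) (B i) (C i))

theorem subF_eq_top_iff {A B : ι → L} : subF A B = ⊤ ↔ A ≤ B := by
  simp only [subF, iInf_eq_top, himp_eq_top_iff, Pi.le_def]

theorem subF_inf_le (A B : ι → L) (i : ι) : subF A B ⊓ A i ≤ B i :=
  (inf_le_inf_right _ (iInf_le _ i)).trans himp_inf_le

theorem isLOrder_subF : IsLOrder (subF : (ι → L) → (ι → L) → L) := by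
  refine ⟨subF_self, subF_inf_subF_le, fun A B hAB => le_antisymm ?_ ?_⟩
  · exact subF_eq_top_iff.mp (top_le_iff.mp (hAB ▸ inf_le_left))
  · exact subF_eq_top_iff.mp (top_le_iff.mp (hAB ▸ inf_le_right))

theorem IsLOrder.comp_injective {P Q : Type*} {e : Q → Q → L} (he : IsLOrder e) {f : P → Q}
    (hf : Function.Injective f) : IsLOrder (fun x y => e (f x) (f y)) :=
  ⟨fun x => he.1 (f x), fun x y z => he.2.1 (f x) (f y) (f z),
    fun x y hxy => hf (he.2.2 (f x) (f y) hxy)⟩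

theorem subF_iSup_inf {P : Type*} (D : P → L) (f : P → ι → L) (g : ι → L) :
    subF (fun i => ⨆ p, D p ⊓ f p i) g = ⨅ p, D p ⇨ subF (f p) g := by
  simp only [subF, iSup_himp_eq, himp_iInf_eq, himp_himp]
  exact iInf_comm

end InclusionOrder

section Points

variable {X : Type*} {𝒪 : Set (X → L)}

abbrev Pt (𝒪 : Set (X → L)) := {p : 𝒪 → L // IsPoint 𝒪 p}

def weightedSup (𝔻 : Pt 𝒪 → L) : 𝒪 → L := fun A => ⨆ p : Pt 𝒪, 𝔻 p ⊓ p.1 A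

theorem weightedSup_eq_inf {𝔻 : Pt 𝒪 → L}
    (hdir : ∀ p q, 𝔻 p ⊓ 𝔻 q ≤ ⨆ z, 𝔻 z ⊓ subF p.1 z.1 ⊓ subF q.1 z.1)
    {A B C : 𝒪} (hC : (C : X → L) = (A : X → L) ⊓ (B : X → L)) :
    weightedSup 𝔻 C = weightedSup 𝔻 A ⊓ weightedSup 𝔻 B := by
  have hCz : ∀ z : Pt 𝒪, z.1 C = z.1 A ⊓ z.1 B := fun z => z.2.1 A B C hC
  simp only [weightedSup, hCz]
  refine le_antisymm (iSup_le fun p => le_inf ?_ ?_) ?_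
  · exact le_iSup_of_le p (inf_le_inf_left _ inf_le_left)
  · exact le_iSup_of_le p (inf_le_inf_left _ inf_le_right)
  simp only [iSup_inf_eq, inf_iSup_eq]
  refine iSup₂_le fun q p => ?_
  calc 𝔻 p ⊓ p.1 A ⊓ (𝔻 q ⊓ q.1 B) = 𝔻 p ⊓ 𝔻 q ⊓ (p.1 A ⊓ q.1 B) := by ac_rfl
    _ ≤ (⨆ z, 𝔻 z ⊓ subF p.1 z.1 ⊓ subF q.1 z.1) ⊓ (p.1 A ⊓ q.1 B) :=
        inf_le_inf_right _ (hdir p q)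
    _ = ⨆ z, 𝔻 z ⊓ (subF p.1 z.1 ⊓ p.1 A) ⊓ (subF q.1 z.1 ⊓ q.1 B) := by
        rw [iSup_inf_eq]; congr! 1 with z; ac_rfl
    _ ≤ ⨆ z, 𝔻 z ⊓ (z.1 A ⊓ z.1 B) := by
        refine iSup_mono fun z => ?_
        rw [inf_assoc]
        exact inf_le_inf_left _ (inf_le_inf (subF_inf_le _ _ A) (subF_inf_le _ _ B))

theorem isPoint_weightedSup {𝔻 : Pt 𝒪 → L}
    (h𝔻 : IsDirectedL (fun p q : Pt 𝒪 => subPt 𝒪 p.1 q.1) 𝔻) :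
    IsPoint 𝒪 (weightedSup 𝔻) := by
  obtain ⟨htop, hdir⟩ := h𝔻
  refine ⟨fun A B C hC => weightedSup_eq_inf hdir hC, fun S C hC => ?_, fun a C hC => ?_⟩
  · simp only [weightedSup, fun p : Pt 𝒪 => p.2.2.1 S C hC, inf_iSup_eq]
    rw [iSup_comm]
    exact iSup_congr fun A => iSup_comm
  · simp only [weightedSup, fun p : Pt 𝒪 => p.2.2.2 a C hC, ← iSup_inf_eq, htop, top_inf_eq]

end Points

theorem stmt9_general {X : Type*} (𝒪 : Set (X → L)) :
    IsLOrder (fun p q : {p : 𝒪 → L // IsPoint 𝒪 p} => subPt 𝒪 p.1 q.1) ∧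
    ∀ 𝔻 : {p : 𝒪 → L // IsPoint 𝒪 p} → L,
      IsDirectedL (fun p q : {p : 𝒪 → L // IsPoint 𝒪 p} => subPt 𝒪 p.1 q.1) 𝔻 →
      ∃ h : IsPoint 𝒪 (fun A => ⨆ p : {p : 𝒪 → L // IsPoint 𝒪 p}, 𝔻 p ⊓ p.1 A),
        IsSupOf (fun p q : {p : 𝒪 → L // IsPoint 𝒪 p} => subPt 𝒪 p.1 q.1) 𝔻
          ⟨fun A => ⨆ p : {p : 𝒪 → L // IsPoint 𝒪 p}, 𝔻 p ⊓ p.1 A, h⟩ :=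
  ⟨isLOrder_subF.comp_injective Subtype.val_injective, fun 𝔻 h𝔻 =>
    ⟨isPoint_weightedSup h𝔻, fun q => subF_iSup_inf 𝔻 (fun p => p.1) q.1⟩⟩

/-- (pt_L𝒪(X), sub) is an L-dcpo with pointwise directed suprema. -/
theorem stmt9 {X : Type*} (𝒪 : Set (X → L)) (hT : IsLTop 𝒪) :
    IsLOrder (fun p q : {p : 𝒪 → L // IsPoint 𝒪 p} => subPt 𝒪 p.1 q.1) ∧
    ∀ 𝔻 : {p : 𝒪 → L // IsPoint 𝒪 p} → L,
      IsDirectedL (fun p q : {p : 𝒪 → L // IsPoint 𝒪 p} => subPt 𝒪 p.1 q.1) 𝔻 →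
      ∃ h : IsPoint 𝒪 (fun A => ⨆ p : {p : 𝒪 → L // IsPoint 𝒪 p}, 𝔻 p ⊓ p.1 A),
        IsSupOf (fun p q : {p : 𝒪 → L // IsPoint 𝒪 p} => subPt 𝒪 p.1 q.1) 𝔻
          ⟨fun A => ⨆ p : {p : 𝒪 → L // IsPoint 𝒪 p}, 𝔻 p ⊓ p.1 A, h⟩ :=
  stmt9_general 𝒪

end FuzzyPaper
end

section
/- Let P be an L-dcpo and x ∈ P. If there exists a directed L-subset D with D ≤ ⇓x (pointwise) and ⊔D = x, then ⇓x is directed and ⊔⇓x = x. -/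
/-!
Testing the definition of `⇓x` against `D` itself (whose supremum is `x`, and `e(x,x) = 1`) gives
`⇓x(y) ≤ ⨆_d D(d) ∧ e(y,d)`. So `⇓x` is squeezed between `D` and the lower closure of `D`, which lies
in `↓x`; directedness and the supremum `x` both pass from `D` to anything so squeezed.
-/

open scoped Classical

namespace FuzzyPaper

variable {L : Type*} [Order.Frame L]

section Transfer

variable {P : Type*} {e : P → P → L} {A D : P → L} {x : P}

theorem IsSupOf.le_of_refl (hsup : IsSupOf e D x) (hrefl : e x x = ⊤) (z : P) : D z ≤ e z x := by
  have h : (⊤ : L) ≤ D z ⇨ e z x := (hrefl ▸ hsup x).le.trans (iInf_le _ z)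
  simpa using le_himp_iff.mp h

theorem dwb_le_iSup_inf (hD : IsDirectedL e D) (hsup : IsSupOf e D x) (hrefl : e x x = ⊤)
    (y : P) : dwb e x y ≤ ⨆ d, D d ⊓ e y d := by
  have h : dwb e x y ≤ e x x ⇨ ⨆ d, D d ⊓ e y d :=
    iInf_le (fun Ds : {Ds : (P → L) × P // IsDirectedL e Ds.1 ∧ IsSupOf e Ds.1 Ds.2} =>
      e x Ds.1.2 ⇨ ⨆ d, Ds.1.1 d ⊓ e y d) ⟨(D, x), hD, hsup⟩
  rwa [hrefl, top_himp] at h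

theorem iSup_inf_le_of_le_lower (htrans : ∀ a b c, e a b ⊓ e b c ≤ e a c)
    (hDx : ∀ d, D d ≤ e d x) (y : P) : ⨆ d, D d ⊓ e y d ≤ e y x :=
  iSup_le fun d => (le_inf inf_le_right (inf_le_left.trans (hDx d))).trans (htrans y d x)

theorem IsDirectedL.of_le_of_le_iSup_inf (htrans : ∀ a b c, e a b ⊓ e b c ≤ e a c)
    (hD : IsDirectedL e D) (hDA : D ≤ A) (hAD : ∀ y, A y ≤ ⨆ d, D d ⊓ e y d) :
    IsDirectedL e A := by
  refine ⟨top_le_iff.mp (hD.1 ▸ iSup_mono hDA), fun a b => ?_⟩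
  have hpair : ∀ d d', (D d ⊓ e a d) ⊓ (D d' ⊓ e b d') ≤ ⨆ z, A z ⊓ e a z ⊓ e b z := by
    intro d d'
    calc (D d ⊓ e a d) ⊓ (D d' ⊓ e b d') = (e a d ⊓ e b d') ⊓ (D d ⊓ D d') := by ac_rfl
      _ ≤ (e a d ⊓ e b d') ⊓ ⨆ z, D z ⊓ e d z ⊓ e d' z := inf_le_inf_left _ (hD.2 d d')
      _ = ⨆ z, D z ⊓ (e a d ⊓ e d z) ⊓ (e b d' ⊓ e d' z) := by
        rw [inf_iSup_eq]
        exact iSup_congr fun z => by ac_rfl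
      _ ≤ ⨆ z, A z ⊓ e a z ⊓ e b z :=
        iSup_mono fun z => inf_le_inf (inf_le_inf (hDA z) (htrans a d z)) (htrans b d' z)
  calc A a ⊓ A b ≤ (⨆ d, D d ⊓ e a d) ⊓ ⨆ d', D d' ⊓ e b d' := inf_le_inf (hAD a) (hAD b)
    _ = ⨆ p : P × P, (D p.1 ⊓ e a p.1) ⊓ (D p.2 ⊓ e b p.2) := iSup_inf_iSup
    _ ≤ ⨆ z, A z ⊓ e a z ⊓ e b z := iSup_le fun p => hpair p.1 p.2

theorem IsSupOf.of_le_of_le_lower (htrans : ∀ a b c, e a b ⊓ e b c ≤ e a c)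
    (hsup : IsSupOf e D x) (hDA : D ≤ A) (hAx : ∀ z, A z ≤ e z x) : IsSupOf e A x := by
  intro y
  refine le_antisymm (le_iInf fun z => le_himp_iff.mpr ?_) ?_
  · exact (le_inf (inf_le_right.trans (hAx z)) inf_le_left).trans (htrans z x y)
  · exact (hsup y).symm ▸ iInf_mono fun z => himp_le_himp_right (hDA z)

end Transfer

/-- If some directed D ≤ ⇓x has supremum x, then ⇓x is directed with supremum x. -/
theorem stmt12 {P : Type*} (e : P → P → L) (he : IsLDcpo e) (x : P) (D : P → L)
    (hD : IsDirectedL e D) (hle : D ≤ dwb e x) (hsup : IsSupOf e D x) :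
    IsDirectedL e (dwb e x) ∧ IsSupOf e (dwb e x) x := by
  obtain ⟨⟨hrefl, htrans, -⟩, -⟩ := he
  have hwb := dwb_le_iSup_inf hD hsup (hrefl x)
  have hwbx (z : P) : dwb e x z ≤ e z x :=
    (hwb z).trans (iSup_inf_le_of_le_lower htrans (hsup.le_of_refl (hrefl x)) z)
  exact ⟨hD.of_le_of_le_iSup_inf htrans hle hwb, hsup.of_le_of_le_lower htrans hle hwbx⟩

end FuzzyPaper
end

section
/- Let P be an algebraic L-dcpo. Then {↑y : y ∈ K(P)} is a base of the Scott L-topology on P consisting of super-compact open sets; hence the Scott space Σ_L P is strong locally super-compact. -/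
open scoped Classical

namespace FuzzyPaper

variable {L : Type*} [Order.Frame L]

/- A Scott open `A` is an upper L-subset, so by the Yoneda-type identity
`sub(↑y, A) = A y` the base condition at `x` reads `A x = ⨆_{y ∈ K(P)} A y ⊓ e(y, x)`; this is
Scott inaccessibility of `A` applied to the directed L-subset `k(x)`, whose supremum is `x`.
The same identity turns `sub(↑y, ⋁ᵢ Vᵢ) = ⋁ᵢ sub(↑y, Vᵢ)` into `(⋁ᵢ Vᵢ) y = ⋁ᵢ Vᵢ y`, so every
principal filter `↑y` is super-compact, and compactness of `y` makes `↑y` Scott open. -/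

def IsUpperL {P : Type*} (e : P → P → L) (A : P → L) : Prop :=
  ∀ x y, A x ⊓ e x y ≤ A y

section Principal

variable {P : Type*} {e : P → P → L}

theorem IsScottOpen.isUpperL {A : P → L} (hA : IsScottOpen e A) : IsUpperL e A := hA.1

theorem IsUpperL.sSup {S : Set (P → L)} (hS : ∀ V ∈ S, IsUpperL e V) :
    IsUpperL e (sSup S) := by
  intro x z
  rw [sSup_apply, sSup_apply, iSup_inf_eq]
  exact iSup_le fun V => le_iSup_of_le V (hS V V.2 x z)

theorem subF_principal_eq {A : P → L} (hA : IsUpperL e A) {y : P} (hy : e y y = ⊤) :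
    subF (e y) A = A y := by
  refine le_antisymm ((iInf_le _ y).trans ?_) (le_iInf fun x => le_himp_iff.mpr (hA y x))
  rw [hy, top_himp]

theorem IsSupOf.le {D : P → L} {s : P} (hs : IsSupOf e D s) (hrefl : e s s = ⊤) (z : P) :
    D z ≤ e z s := by
  have h : (⊤ : L) ≤ D z ⇨ e z s := (hrefl.symm.trans (hs s)).le.trans (iInf_le _ z)
  simpa using le_himp_iff.mp h

theorem le_iSup_inf_of_dwb_self_eq_top {y : P} (hy : dwb e y y = ⊤) {D : P → L} {s : P}
    (hD : IsDirectedL e D) (hs : IsSupOf e D s) : e y s ≤ ⨆ d, D d ⊓ e y d := by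
  have h : (⊤ : L) ≤ e y s ⇨ ⨆ d, D d ⊓ e y d :=
    hy.ge.trans (iInf_le (fun Ds : {Ds : (P → L) × P // IsDirectedL e Ds.1 ∧ IsSupOf e Ds.1 Ds.2}
      => e y Ds.1.2 ⇨ ⨆ d, Ds.1.1 d ⊓ e y d) ⟨(D, s), hD, hs⟩)
  simpa using le_himp_iff.mp h

theorem isScottOpen_principal (he : IsLOrder e) {y : P} (hy : dwb e y y = ⊤) :
    IsScottOpen e (e y) := by
  refine ⟨fun x z => he.2.1 y x z, fun D s hD hs => le_antisymm ?_ ?_⟩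
  · exact (le_iSup_inf_of_dwb_self_eq_top hy hD hs).trans (iSup_mono fun d => inf_comm _ _ |>.le)
  · exact iSup_le fun x =>
      (inf_le_inf_left _ (hs.le (he.1 s) x)).trans (he.2.1 y x s)

theorem isSuperCompact_principal {𝒪 : Set (P → L)} (h𝒪 : ∀ V ∈ 𝒪, IsUpperL e V)
    {y : P} (hy : e y y = ⊤) : IsSuperCompact 𝒪 (e y) := by
  refine ⟨top_unique (le_iSup_of_le y hy.ge), fun S hS => ?_⟩
  have hup : ∀ V ∈ S, IsUpperL e V := fun V hV => h𝒪 V (hS hV)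
  rw [subF_principal_eq (IsUpperL.sSup hup) hy, sSup_apply]
  apply le_antisymm
  · exact iSup_le fun V => le_iSup₂_of_le V.1 V.2 (subF_principal_eq (hup V.1 V.2) hy).ge
  · exact iSup₂_le fun V hV =>
      (subF_principal_eq (hup V hV) hy).le.trans (le_iSup (fun V : S => (V : P → L) y) ⟨V, hV⟩)

theorem isScottOpen_eq_iSup_compact (he : IsLOrder e) {x : P}
    (hk : IsDirectedL e (kfun e x) ∧ IsSupOf e (kfun e x) x) {A : P → L} (hA : IsScottOpen e A) :
    A x = ⨆ B ∈ {B | ∃ y : P, dwb e y y = ⊤ ∧ B = e y}, subF B A ⊓ B x := by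
  apply le_antisymm
  · rw [hA.2 (kfun e x) x hk.1 hk.2]
    refine iSup_le fun z => ?_
    by_cases hz : dwb e z z = ⊤
    · refine le_iSup₂_of_le (e z) ⟨z, hz, rfl⟩ ?_
      rw [subF_principal_eq hA.isUpperL (he.1 z), kfun, if_pos hz]
    · simp [kfun, if_neg hz]
  · refine iSup₂_le ?_
    rintro B ⟨y, -, rfl⟩
    rw [subF_principal_eq hA.isUpperL (he.1 y)]
    exact hA.isUpperL y x

end Principal

/-- For an algebraic L-dcpo, {↑y : y compact} is a base of σ_L(P) consisting of
super-compact open sets; hence Σ_L P is strong locally super-compact. -/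
theorem stmt18 {P : Type*} (e : P → P → L) (ha : IsAlgebraicLDcpo e) :
    IsBase (scottOpens e) {B | ∃ y : P, dwb e y y = ⊤ ∧ B = fun x => e y x} ∧
    (∀ B ∈ {B | ∃ y : P, dwb e y y = ⊤ ∧ B = fun x => e y x},
      IsSuperCompact (scottOpens e) B) ∧
    IsStrongLocallySC (scottOpens e) := by
  obtain ⟨⟨he, -⟩, halg⟩ := ha
  have hsc : ∀ B ∈ {B | ∃ y : P, dwb e y y = ⊤ ∧ B = fun x => e y x},
      IsSuperCompact (scottOpens e) B := by
    rintro B ⟨y, -, rfl⟩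
    exact isSuperCompact_principal (fun V hV => IsScottOpen.isUpperL hV) (he.1 y)
  have hbase : IsBase (scottOpens e) {B | ∃ y : P, dwb e y y = ⊤ ∧ B = fun x => e y x} := by
    refine ⟨?_, fun A hA => funext fun x => isScottOpen_eq_iSup_compact he (halg x) hA⟩
    rintro B ⟨y, hy, rfl⟩
    exact isScottOpen_principal he hy
  exact ⟨hbase, hsc, _, hbase, hsc⟩

end FuzzyPaper
end
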